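/- Deleting a defeasibly-proved literal from a defeasible rule body preserves consequences: Let D be a basic defeasible theory interpreted with separated reasoning, let r be a defeasible rule of D whose body contains the literal q, and suppose D ⊢ +∂q. Let D' be obtained from D by replacing r with the rule r' that is r with q deleted from its body. Then D ≡ D', i.e. D and D' have identical sets of consequences (including extended conclusions). -/
import Mathlib


/-- A propositional literal: an atom or its negation. -/
inductive Lit where
  | pos : ℕ → Lit
  | neg : ℕ → Lit
deriving DecidableEq

/-- The complement ~q of a literal q. -/
def Lit.compl : Lit → Lit
  | .pos n => .neg n
  | .neg n => .pos n

/-- The atom underlying a literal. -/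
def Lit.atom : Lit → ℕ
  | .pos n => n
  | .neg n => n

/-- The three kinds of rules: strict (→), defeasible (⇒), defeater (⇝). -/
inductive RuleKind where
  | strict | defeasible | defeater
deriving DecidableEq

/-- A rule: a finite body of literals, a head literal, and a kind. -/
structure Rule where
  body : Finset Lit
  head : Lit
  kind : RuleKind
deriving DecidableEq

/-- A propositional defeasible theory: finite facts, finite rules, and an
acyclic superiority relation on rules. -/
structure DTheory where
  facts : Finset Lit
  rules : Finset Rule
  sup : Rule → Rule → Prop
  sup_acyclic : ∀ r, ¬ Relation.TransGen sup r r

/-- Tagged literals (extended conclusions): tags ±Δ, ±∂, ±σ. -/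
inductive TaggedLit where
  | pDelta : Lit → TaggedLit
  | mDelta : Lit → TaggedLit
  | pPartial : Lit → TaggedLit
  | mPartial : Lit → TaggedLit
  | pSigma : Lit → TaggedLit
  | mSigma : Lit → TaggedLit
deriving DecidableEq

/-- The literal of a tagged literal. -/
def TaggedLit.lit : TaggedLit → Lit
  | .pDelta q => q
  | .mDelta q => q
  | .pPartial q => q
  | .mPartial q => q
  | .pSigma q => q
  | .mSigma q => q

/-- Tagged literals whose tag is among +Δ, −Δ, +∂, −∂ (conclusions proper). -/
def TaggedLit.IsConclusionTag : TaggedLit → Prop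
  | .pDelta _ => True
  | .mDelta _ => True
  | .pPartial _ => True
  | .mPartial _ => True
  | .pSigma _ => False
  | .mSigma _ => False

/-- R_s[q]: strict rules with head q. -/
def DTheory.Rs (D : DTheory) (q : Lit) : Set Rule :=
  {r | r ∈ D.rules ∧ r.kind = RuleKind.strict ∧ r.head = q}

/-- R_sd[q]: strict and defeasible rules with head q. -/
def DTheory.Rsd (D : DTheory) (q : Lit) : Set Rule :=
  {r | r ∈ D.rules ∧ r.kind ≠ RuleKind.defeater ∧ r.head = q}

/-- R_d[q]: defeasible rules with head q. -/
def DTheory.Rd (D : DTheory) (q : Lit) : Set Rule :=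
  {r | r ∈ D.rules ∧ r.kind = RuleKind.defeasible ∧ r.head = q}

/-- R[q]: all rules with head q. -/
def DTheory.Rall (D : DTheory) (q : Lit) : Set Rule :=
  {r | r ∈ D.rules ∧ r.head = q}

/-- The rules used for defeasible provability (tags ±∂, ±σ): under separated
reasoning (`sep = true`) these are the defeasible rules R_d[q]; under the
standard interpretation (`sep = false`) they are R_sd[q]. -/
def DTheory.RD (D : DTheory) (sep : Bool) (q : Lit) : Set Rule :=
  if sep then D.Rd q else D.Rsd q

/-- `Step sep D S c` holds iff the tagged literal `c` may be appended to a
derivation in `D` whose set of preceding lines is `S`, by one of the inference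
rules (±Δ, ±∂, ±σ).  `sep` selects separated reasoning. -/
inductive Step (sep : Bool) (D : DTheory) (S : Set TaggedLit) : TaggedLit → Prop
  | plusDelta (q : Lit) :
      (q ∈ D.facts ∨ ∃ r ∈ D.Rs q, ∀ a ∈ r.body, TaggedLit.pDelta a ∈ S) →
      Step sep D S (TaggedLit.pDelta q)
  | minusDelta (q : Lit) :
      q ∉ D.facts →
      (∀ r ∈ D.Rs q, ∃ a ∈ r.body, TaggedLit.mDelta a ∈ S) →
      Step sep D S (TaggedLit.mDelta q)
  | plusPartial (q : Lit) :
      (TaggedLit.pDelta q ∈ S ∨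
        ((∃ r ∈ D.RD sep q, ∀ a ∈ r.body, TaggedLit.pPartial a ∈ S) ∧
         TaggedLit.mDelta q.compl ∈ S ∧
         (∀ s ∈ D.Rall q.compl,
            (∃ a ∈ s.body, TaggedLit.mPartial a ∈ S) ∨
            (∃ t ∈ D.RD sep q, D.sup t s ∧ ∀ a ∈ t.body, TaggedLit.pPartial a ∈ S)))) →
      Step sep D S (TaggedLit.pPartial q)
  | minusPartial (q : Lit) :
      TaggedLit.mDelta q ∈ S →
      ((∀ r ∈ D.RD sep q, ∃ a ∈ r.body, TaggedLit.mPartial a ∈ S) ∨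
       TaggedLit.pDelta q.compl ∈ S ∨
       (∃ s ∈ D.Rall q.compl,
          (∀ a ∈ s.body, TaggedLit.pPartial a ∈ S) ∧
          (∀ t ∈ D.RD sep q,
             (∃ a ∈ t.body, TaggedLit.mPartial a ∈ S) ∨ ¬ D.sup t s))) →
      Step sep D S (TaggedLit.mPartial q)
  | plusSigma (q : Lit) :
      (∃ r ∈ D.RD sep q, ∀ a ∈ r.body, TaggedLit.pPartial a ∈ S) →
      Step sep D S (TaggedLit.pSigma q)
  | minusSigma (q : Lit) :
      (∀ r ∈ D.RD sep q, ∃ a ∈ r.body, TaggedLit.mPartial a ∈ S) →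
      Step sep D S (TaggedLit.mSigma q)

/-- Derivations: finite sequences of tagged literals, each justified by its
predecessors via the inference rules. -/
inductive IsDerivation (sep : Bool) (D : DTheory) : List TaggedLit → Prop
  | nil : IsDerivation sep D []
  | snoc (P : List TaggedLit) (c : TaggedLit) :
      IsDerivation sep D P → Step sep D {x | x ∈ P} c →
      IsDerivation sep D (P ++ [c])

/-- D ⊢ c : the tagged literal c occurs in some derivation in D. -/
def Proves (sep : Bool) (D : DTheory) (c : TaggedLit) : Prop :=
  ∃ P, IsDerivation sep D P ∧ c ∈ P

/-- A basic defeasible theory: no defeaters and an empty superiority relation. -/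
def DTheory.Basic (D : DTheory) : Prop :=
  (∀ r ∈ D.rules, r.kind ≠ RuleKind.defeater) ∧ (∀ r s : Rule, ¬ D.sup r s)

/-- D has duplicated strict rules: every strict rule has a defeasible copy. -/
def DTheory.DupStrictRules (D : DTheory) : Prop :=
  ∀ r ∈ D.rules, r.kind = RuleKind.strict →
    Rule.mk r.body r.head RuleKind.defeasible ∈ D.rules

/-- The literals of the (finite) language of D: all literals over atoms
occurring in D. -/
def DTheory.lits (D : DTheory) : Set Lit :=
  {l | (∃ f ∈ D.facts, f.atom = l.atom) ∨
       ∃ r ∈ D.rules, r.head.atom = l.atom ∨ ∃ a ∈ r.body, a.atom = l.atom}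

namespace DelAux

/-- `Step` is monotone in the set of preceding lines. -/
lemma step_mono {sep : Bool} {D : DTheory} {S S' : Set TaggedLit} (hss : S ⊆ S')
    {c : TaggedLit} (h : Step sep D S c) : Step sep D S' c := by
  cases h with
  | plusDelta p h =>
    refine .plusDelta p ?_
    rcases h with h | ⟨rr, hrr, hb⟩
    · exact .inl h
    · exact .inr ⟨rr, hrr, fun a ha => hss (hb a ha)⟩
  | minusDelta p h1 h2 =>
    exact .minusDelta p h1 (fun rr hrr => (h2 rr hrr).imp fun a ⟨ha, hm⟩ => ⟨ha, hss hm⟩)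
  | plusPartial p h =>
    refine .plusPartial p ?_
    rcases h with h | ⟨⟨rr, hrr, hb⟩, hm, hall⟩
    · exact .inl (hss h)
    · refine .inr ⟨⟨rr, hrr, fun a ha => hss (hb a ha)⟩, hss hm, fun s hs => ?_⟩
      rcases hall s hs with ⟨a, ha, hma⟩ | ⟨t, ht, hsup, hb'⟩
      · exact .inl ⟨a, ha, hss hma⟩
      · exact .inr ⟨t, ht, hsup, fun a ha => hss (hb' a ha)⟩
  | minusPartial p h1 h2 =>
    refine .minusPartial p (hss h1) ?_
    rcases h2 with h | h | ⟨s, hs, hb, hall⟩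
    · exact .inl fun rr hrr => (h rr hrr).imp fun a ⟨ha, hm⟩ => ⟨ha, hss hm⟩
    · exact .inr (.inl (hss h))
    · refine .inr (.inr ⟨s, hs, fun a ha => hss (hb a ha), fun t ht => ?_⟩)
      rcases hall t ht with ⟨a, ha, hm⟩ | hn
      · exact .inl ⟨a, ha, hss hm⟩
      · exact .inr hn
  | plusSigma p h =>
    exact .plusSigma p (h.imp fun rr ⟨h1, hb⟩ => ⟨h1, fun a ha => hss (hb a ha)⟩)
  | minusSigma p h =>
    exact .minusSigma p fun rr hrr => (h rr hrr).imp fun a ⟨ha, hm⟩ => ⟨ha, hss hm⟩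

/-- Any element of a derivation is justified by a strictly shorter derivation. -/
lemma mem_step {sep : Bool} {D : DTheory} {P : List TaggedLit}
    (hP : IsDerivation sep D P) {c : TaggedLit} (hc : c ∈ P) :
    ∃ P', IsDerivation sep D P' ∧ P'.length < P.length ∧ Step sep D {x | x ∈ P'} c := by
  induction hP with
  | nil => simp at hc
  | snoc P c' hP hstep ih =>
    rcases List.mem_append.mp hc with h | h
    · obtain ⟨P', h1, h2, h3⟩ := ih h
      exact ⟨P', h1, by simp; omega, h3⟩
    · simp only [List.mem_singleton] at h
      subst h
      exact ⟨P, hP, by simp, hstep⟩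

lemma mem_Rd_iff (D : DTheory) (s : Rule) (p : Lit) :
    s ∈ D.RD true p ↔ s ∈ D.rules ∧ s.kind = RuleKind.defeasible ∧ s.head = p := Iff.rfl

lemma mem_Rall_iff (D : DTheory) (s : Rule) (p : Lit) :
    s ∈ D.Rall p ↔ s ∈ D.rules ∧ s.head = p := Iff.rfl

/-- Coherence: a basic theory cannot derive both +Δl and −Δl, nor both +∂l and −∂l. -/
lemma coherence (D : DTheory) (hB : D.Basic) :
    ∀ n : ℕ, ∀ P1 P2 : List TaggedLit, IsDerivation true D P1 → IsDerivation true D P2 →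
      P1.length + P2.length ≤ n → ∀ l : Lit,
      ¬(TaggedLit.pDelta l ∈ P1 ∧ TaggedLit.mDelta l ∈ P2) ∧
      ¬(TaggedLit.pPartial l ∈ P1 ∧ TaggedLit.mPartial l ∈ P2) := by
  intro n
  induction n using Nat.strong_induction_on with
  | _ n ih =>
    intro P1 P2 h1 h2 hlen l
    constructor
    · rintro ⟨hp, hm⟩
      obtain ⟨Q1, hQ1, hl1, hs1⟩ := mem_step h1 hp
      obtain ⟨Q2, hQ2, hl2, hs2⟩ := mem_step h2 hm
      cases hs1 with | plusDelta _ hpos =>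
      cases hs2 with | minusDelta _ hnf hall =>
      rcases hpos with hf | ⟨rr, hrr, hb⟩
      · exact hnf hf
      · obtain ⟨a, ha, hma⟩ := hall rr hrr
        exact (ih (Q1.length + Q2.length) (by omega) Q1 Q2 hQ1 hQ2 le_rfl a).1
          ⟨hb a ha, hma⟩
    · rintro ⟨hp, hm⟩
      obtain ⟨Q1, hQ1, hl1, hs1⟩ := mem_step h1 hp
      obtain ⟨Q2, hQ2, hl2, hs2⟩ := mem_step h2 hm
      have IH := fun (a : Lit) =>
        ih (Q1.length + Q2.length) (by omega) Q1 Q2 hQ1 hQ2 le_rfl a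
      have IH' := fun (a : Lit) =>
        ih (Q2.length + Q1.length) (by omega) Q2 Q1 hQ2 hQ1 le_rfl a
      cases hs1 with | plusPartial _ hpos =>
      cases hs2 with | minusPartial _ hmd hneg =>
      rcases hpos with hpd | ⟨⟨rr, hrr, hb⟩, hmdc, hall⟩
      · exact (IH l).1 ⟨hpd, hmd⟩
      · rcases hneg with hA | hBd | ⟨s, hs, hsb, _⟩
        · obtain ⟨a, ha, hma⟩ := hA rr hrr
          exact (IH a).2 ⟨hb a ha, hma⟩
        · exact (IH' l.compl).1 ⟨hBd, hmdc⟩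
        · rcases hall s hs with ⟨a, ha, hma⟩ | ⟨t, _, hsup, _⟩
          · exact (IH' a).2 ⟨hsb a ha, hma⟩
          · exact absurd hsup (hB.2 _ _)

section Transfer

variable (D : DTheory) (r : Rule) (q : Lit)

/-- The rule `r` with `q` deleted from its body. -/
def r' : Rule := ⟨r.body.erase q, r.head, r.kind⟩

/-- The modified theory. -/
def D' : DTheory :=
  ⟨D.facts, insert (r' r q) (D.rules.erase r), D.sup, D.sup_acyclic⟩

variable (hB : D.Basic) (hr : r ∈ D.rules) (hk : r.kind = RuleKind.defeasible)

include hk in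
lemma Rs_eq (p : Lit) : (D' D r q).Rs p = D.Rs p := by
  ext s
  simp only [DTheory.Rs, Set.mem_setOf_eq, D', Finset.mem_insert, Finset.mem_erase]
  constructor
  · rintro ⟨h | ⟨hne, hmem⟩, hkind, hhead⟩
    · subst h; simp [r', hk] at hkind
    · exact ⟨hmem, hkind, hhead⟩
  · rintro ⟨hmem, hkind, hhead⟩
    refine ⟨Or.inr ⟨fun e => ?_, hmem⟩, hkind, hhead⟩
    subst e; rw [hk] at hkind; exact absurd hkind (by decide)

include hk in
lemma mem_RD' {s : Rule} {p : Lit} :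
    s ∈ (D' D r q).RD true p ↔ (s = r' r q ∧ r.head = p) ∨ (s ≠ r ∧ s ∈ D.RD true p) := by
  simp only [mem_Rd_iff]
  constructor
  · rintro ⟨hmem, hkind, hhead⟩
    rcases Finset.mem_insert.mp hmem with h | h
    · refine .inl ⟨h, ?_⟩
      subst h; exact hhead
    · exact .inr ⟨(Finset.mem_erase.mp h).1, (Finset.mem_erase.mp h).2, hkind, hhead⟩
  · rintro (⟨rfl, hh⟩ | ⟨hne, hmem, hkind, hhead⟩)
    · exact ⟨Finset.mem_insert_self _ _, hk, hh⟩
    · exact ⟨Finset.mem_insert_of_mem (Finset.mem_erase.mpr ⟨hne, hmem⟩), hkind, hhead⟩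

lemma mem_Rall' {s : Rule} {p : Lit} :
    s ∈ (D' D r q).Rall p ↔ (s = r' r q ∧ r.head = p) ∨ (s ≠ r ∧ s ∈ D.Rall p) := by
  simp only [mem_Rall_iff]
  constructor
  · rintro ⟨hmem, hhead⟩
    rcases Finset.mem_insert.mp hmem with h | h
    · refine .inl ⟨h, ?_⟩
      subst h; exact hhead
    · exact .inr ⟨(Finset.mem_erase.mp h).1, (Finset.mem_erase.mp h).2, hhead⟩
  · rintro (⟨rfl, hh⟩ | ⟨hne, hmem, hhead⟩)
    · exact ⟨Finset.mem_insert_self _ _, hh⟩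
    · exact ⟨Finset.mem_insert_of_mem (Finset.mem_erase.mpr ⟨hne, hmem⟩), hhead⟩

include hr hk in
lemma r_mem_RD {p : Lit} (hh : r.head = p) : r ∈ D.RD true p :=
  (mem_Rd_iff D r p).mpr ⟨hr, hk, hh⟩

variable (hq : q ∈ r.body)

include hB hr hk hq in
/-- Step transfer from D' to D, given +∂q among the preceding lines. -/
lemma stepT1 {S : Set TaggedLit} {c : TaggedLit} (hqS : TaggedLit.pPartial q ∈ S)
    (h : Step true (D' D r q) S c) : Step true D S c := by
  have hbody : ∀ {a : Lit}, a ∈ (r' r q).body → a ∈ r.body :=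
    fun ha => (Finset.mem_erase.mp ha).2
  have hfill : ∀ {S' : Set TaggedLit}, TaggedLit.pPartial q ∈ S' →
      (∀ a ∈ (r' r q).body, TaggedLit.pPartial a ∈ S') →
      ∀ a ∈ r.body, TaggedLit.pPartial a ∈ S' := by
    intro S' hqS' hb a ha
    by_cases haq : a = q
    · exact haq ▸ hqS'
    · exact hb a (Finset.mem_erase.mpr ⟨haq, ha⟩)
  cases h with
  | plusDelta p h =>
    refine .plusDelta p ?_
    rcases h with h | ⟨rr, hrr, hb⟩
    · exact .inl h
    · exact .inr ⟨rr, (Rs_eq D r q hk p) ▸ hrr, hb⟩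
  | minusDelta p h1 h2 =>
    refine .minusDelta p h1 fun rr hrr => h2 rr ?_
    rw [Rs_eq D r q hk p]; exact hrr
  | plusPartial p h =>
    refine .plusPartial p ?_
    rcases h with h | ⟨⟨rr, hrr, hb⟩, hm, hall⟩
    · exact .inl h
    · refine .inr ⟨?_, hm, ?_⟩
      · rcases (mem_RD' D r q hk).mp hrr with ⟨rfl, hh⟩ | ⟨_, hmem⟩
        · exact ⟨r, r_mem_RD D r hr hk hh, hfill hqS hb⟩
        · exact ⟨rr, hmem, hb⟩
      · intro s hs
        by_cases hsr : s = r
        · have hmem : r' r q ∈ (D' D r q).Rall p.compl :=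
            (mem_Rall' D r q).mpr (.inl ⟨rfl, hsr ▸ ((mem_Rall_iff D s p.compl).mp hs).2⟩)
          rcases hall _ hmem with ⟨a, ha, hma⟩ | ⟨t, _, hsup, _⟩
          · exact .inl ⟨a, hsr.symm ▸ hbody ha, hma⟩
          · exact absurd hsup (hB.2 _ _)
        · rcases hall s ((mem_Rall' D r q).mpr (.inr ⟨hsr, hs⟩)) with
            ⟨a, ha, hma⟩ | ⟨t, _, hsup, _⟩
          · exact .inl ⟨a, ha, hma⟩
          · exact absurd hsup (hB.2 _ _)
  | minusPartial p h1 h2 =>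
    refine .minusPartial p h1 ?_
    rcases h2 with hA | hBd | ⟨s, hs, hsb, _⟩
    · refine .inl fun rr hrr => ?_
      by_cases hrrr : rr = r
      · obtain ⟨a, ha, hma⟩ := hA (r' r q)
          ((mem_RD' D r q hk).mpr (.inl ⟨rfl, hrrr ▸ ((mem_Rd_iff D rr p).mp hrr).2.2⟩))
        exact ⟨a, hrrr.symm ▸ hbody ha, hma⟩
      · exact hA rr ((mem_RD' D r q hk).mpr (.inr ⟨hrrr, hrr⟩))
    · exact .inr (.inl hBd)
    · refine .inr (.inr ?_)
      rcases (mem_Rall' D r q).mp hs with ⟨rfl, hh⟩ | ⟨hne, hmem⟩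
      · exact ⟨r, (mem_Rall_iff D r p.compl).mpr ⟨hr, hh⟩, hfill hqS hsb,
          fun t _ => .inr (hB.2 _ _)⟩
      · exact ⟨s, hmem, hsb, fun t _ => .inr (hB.2 _ _)⟩
  | plusSigma p h =>
    obtain ⟨rr, hrr, hb⟩ := h
    refine .plusSigma p ?_
    rcases (mem_RD' D r q hk).mp hrr with ⟨rfl, hh⟩ | ⟨_, hmem⟩
    · exact ⟨r, r_mem_RD D r hr hk hh, hfill hqS hb⟩
    · exact ⟨rr, hmem, hb⟩
  | minusSigma p h =>
    refine .minusSigma p fun rr hrr => ?_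
    by_cases hrrr : rr = r
    · obtain ⟨a, ha, hma⟩ := h (r' r q)
        ((mem_RD' D r q hk).mpr (.inl ⟨rfl, hrrr ▸ ((mem_Rd_iff D rr p).mp hrr).2.2⟩))
      exact ⟨a, hrrr.symm ▸ hbody ha, hma⟩
    · exact h rr ((mem_RD' D r q hk).mpr (.inr ⟨hrrr, hrr⟩))

include hB hr hk in
/-- Step transfer from D to D', given that −∂q is not among the preceding lines. -/
lemma stepT2 {S : Set TaggedLit} {c : TaggedLit} (hnS : TaggedLit.mPartial q ∉ S)
    (h : Step true D S c) : Step true (D' D r q) S c := by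
  have hbody : ∀ {a : Lit}, a ∈ (r' r q).body → a ∈ r.body :=
    fun ha => (Finset.mem_erase.mp ha).2
  cases h with
  | plusDelta p h =>
    refine .plusDelta p ?_
    rcases h with h | ⟨rr, hrr, hb⟩
    · exact .inl h
    · exact .inr ⟨rr, (Rs_eq D r q hk p).symm ▸ hrr, hb⟩
  | minusDelta p h1 h2 =>
    refine .minusDelta p h1 fun rr hrr => h2 rr ?_
    rw [← Rs_eq D r q hk p]; exact hrr
  | plusPartial p h =>
    refine .plusPartial p ?_
    rcases h with h | ⟨⟨rr, hrr, hb⟩, hm, hall⟩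
    · exact .inl h
    · refine .inr ⟨?_, hm, ?_⟩
      · by_cases hrrr : rr = r
        · exact ⟨r' r q,
            (mem_RD' D r q hk).mpr (.inl ⟨rfl, hrrr ▸ ((mem_Rd_iff D rr p).mp hrr).2.2⟩),
            fun a ha => hb a (hrrr.symm ▸ hbody ha)⟩
        · exact ⟨rr, (mem_RD' D r q hk).mpr (.inr ⟨hrrr, hrr⟩), hb⟩
      · intro s hs
        rcases (mem_Rall' D r q).mp hs with ⟨rfl, hh⟩ | ⟨hne, hmem⟩
        · rcases hall r ((mem_Rall_iff D r p.compl).mpr ⟨hr, hh⟩) with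
            ⟨a, ha, hma⟩ | ⟨t, _, hsup, _⟩
          · have haq : a ≠ q := fun e => hnS (e ▸ hma)
            exact .inl ⟨a, Finset.mem_erase.mpr ⟨haq, ha⟩, hma⟩
          · exact absurd hsup (hB.2 _ _)
        · rcases hall s hmem with ⟨a, ha, hma⟩ | ⟨t, _, hsup, _⟩
          · exact .inl ⟨a, ha, hma⟩
          · exact absurd hsup (hB.2 _ _)
  | minusPartial p h1 h2 =>
    refine .minusPartial p h1 ?_
    rcases h2 with hA | hBd | ⟨s, hs, hsb, _⟩
    · refine .inl fun rr hrr => ?_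
      rcases (mem_RD' D r q hk).mp hrr with ⟨rfl, hh⟩ | ⟨hne, hmem⟩
      · obtain ⟨a, ha, hma⟩ := hA r (r_mem_RD D r hr hk hh)
        have haq : a ≠ q := fun e => hnS (e ▸ hma)
        exact ⟨a, Finset.mem_erase.mpr ⟨haq, ha⟩, hma⟩
      · exact hA _ hmem
    · exact .inr (.inl hBd)
    · refine .inr (.inr ?_)
      by_cases hsr : s = r
      · exact ⟨r' r q,
          (mem_Rall' D r q).mpr (.inl ⟨rfl, hsr ▸ ((mem_Rall_iff D s p.compl).mp hs).2⟩),
          fun a ha => hsb a (hsr.symm ▸ hbody ha), fun t _ => .inr (hB.2 _ _)⟩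
      · exact ⟨s, (mem_Rall' D r q).mpr (.inr ⟨hsr, hs⟩), hsb,
          fun t _ => .inr (hB.2 _ _)⟩
  | plusSigma p h =>
    obtain ⟨rr, hrr, hb⟩ := h
    refine .plusSigma p ?_
    by_cases hrrr : rr = r
    · exact ⟨r' r q,
        (mem_RD' D r q hk).mpr (.inl ⟨rfl, hrrr ▸ ((mem_Rd_iff D rr p).mp hrr).2.2⟩),
        fun a ha => hb a (hrrr.symm ▸ hbody ha)⟩
    · exact ⟨rr, (mem_RD' D r q hk).mpr (.inr ⟨hrrr, hrr⟩), hb⟩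
  | minusSigma p h =>
    refine .minusSigma p fun rr hrr => ?_
    rcases (mem_RD' D r q hk).mp hrr with ⟨rfl, hh⟩ | ⟨hne, hmem⟩
    · obtain ⟨a, ha, hma⟩ := h r (r_mem_RD D r hr hk hh)
      have haq : a ≠ q := fun e => hnS (e ▸ hma)
      exact ⟨a, Finset.mem_erase.mpr ⟨haq, ha⟩, hma⟩
    · exact h _ hmem

include hB hr hk in
lemma toD' (hprov : Proves true D (TaggedLit.pPartial q)) {P : List TaggedLit}
    (hP : IsDerivation true D P) : IsDerivation true (D' D r q) P := by
  obtain ⟨Qp, hQp, hqm⟩ := hprov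
  induction hP with
  | nil => exact .nil
  | snoc P c hP hstep ih =>
    refine .snoc P c ih (stepT2 D r q hB hr hk ?_ hstep)
    intro hmem
    exact (coherence D hB (Qp.length + P.length) Qp P hQp hP le_rfl q).2 ⟨hqm, hmem⟩

include hB hr hk hq in
lemma fromD' {Qp : List TaggedLit} (hQp : IsDerivation true D Qp)
    (hqm : TaggedLit.pPartial q ∈ Qp) {P : List TaggedLit}
    (hP : IsDerivation true (D' D r q) P) : IsDerivation true D (Qp ++ P) := by
  induction hP with
  | nil => simpa using hQp
  | snoc P c hP hstep ih =>
    rw [← List.append_assoc]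
    refine .snoc (Qp ++ P) c ih ?_
    have hstep' : Step true (D' D r q) {x | x ∈ Qp ++ P} c :=
      step_mono (fun x hx => by simp only [Set.mem_setOf_eq, List.mem_append]; exact .inr hx)
        hstep
    exact stepT1 D r q hB hr hk hq
      (by simp only [Set.mem_setOf_eq, List.mem_append]; exact .inl hqm) hstep'

end Transfer

end DelAux

/-- deleting a defeasibly-proved literal q from the body of a
defeasible rule r of a basic defeasible theory D (separated reasoning)
preserves all consequences (including extended conclusions). -/
theorem delete_proved_lit_defeasible (D : DTheory) (r : Rule) (q : Lit)
    (hBasic : D.Basic) (hr : r ∈ D.rules) (hk : r.kind = RuleKind.defeasible)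
    (hq : q ∈ r.body)
    (hprov : Proves true D (TaggedLit.pPartial q)) :
    ∀ c : TaggedLit,
      Proves true D c ↔
      Proves true
        ⟨D.facts,
         insert (Rule.mk (r.body.erase q) r.head r.kind) (D.rules.erase r),
         D.sup, D.sup_acyclic⟩ c := by
  intro c
  constructor
  · rintro ⟨P, hP, hc⟩
    exact ⟨P, DelAux.toD' D r q hBasic hr hk hprov hP, hc⟩
  · rintro ⟨P, hP, hc⟩
    obtain ⟨Qp, hQp, hqm⟩ := hprov
    exact ⟨Qp ++ P, DelAux.fromD' D r q hBasic hr hk hq hQp hqm hP,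
      List.mem_append.mpr (.inr hc)⟩
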